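/- Suppose for each m we have random variables S_m, D_m on finite spaces and events E_{s,m} with sup_s P(D_m ∈ E_{s,m}) ≤ α + r_m where r_m → 0, and I(S_m; D_m) ≤ η_m with η_m → 0. Then limsup_m P(D_m ∈ E_{S_m, m}) ≤ α. -/

import Mathlib

open scoped BigOperators
open Filter

/-- A probability vector on a finite space. -/
def IsProbVec {α : Type*} [Fintype α] (p : α → ℝ) : Prop :=
  (∀ x, 0 ≤ p x) ∧ ∑ x, p x = 1

/-- Marginal of the first coordinate. -/
noncomputable def margFst {α β : Type*} [Fintype β] (p : α × β → ℝ) (a : α) : ℝ :=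
  ∑ b, p (a, b)

/-- Marginal of the second coordinate. -/
noncomputable def margSnd {α β : Type*} [Fintype α] (p : α × β → ℝ) (b : β) : ℝ :=
  ∑ a, p (a, b)

/-- Mutual information (in nats). -/
noncomputable def mutInf {α β : Type*} [Fintype α] [Fintype β] (p : α × β → ℝ) : ℝ :=
  ∑ a, ∑ b, p (a, b) * Real.log (p (a, b) / (margFst p a * margSnd p b))


/-!
If `S` and `D` were independent, the selected target would have probability
`∑ s, P(S = s) P(D ∈ E s) ≤ α + r`. Pinsker's inequality applied to the single event
`{D ∈ E S}` bounds how much the joint law can deviate from the product of its marginals on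
that event by `√(KL / 2)`, and the KL divergence of the joint law from the product of its
marginals is the mutual information. Hence `P(D_m ∈ E_{S_m,m}) ≤ α + r_m + √(η_m / 2) → α`.
Pinsker on one event is the binary Pinsker inequality combined with the log-sum inequality on
the partition `{A, Aᶜ}`.
-/

open Real Finset

lemma Finset.sum_eq_zero_of_sum_eq_zero_of_imp {ι : Type*} {s : Finset ι} {p q : ι → ℝ}
    (hq : ∀ i ∈ s, 0 ≤ q i) (hpq : ∀ i ∈ s, q i = 0 → p i = 0) (h : ∑ i ∈ s, q i = 0) :
    ∑ i ∈ s, p i = 0 :=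
  sum_eq_zero fun i hi => hpq i hi ((sum_eq_zero_iff_of_nonneg hq).1 h i hi)

/-- The log-sum inequality. -/
theorem sum_mul_log_div_sum_le {ι : Type*} (s : Finset ι) {p q : ι → ℝ}
    (hp : ∀ i ∈ s, 0 ≤ p i) (hq : ∀ i ∈ s, 0 ≤ q i) (hpq : ∀ i ∈ s, q i = 0 → p i = 0) :
    (∑ i ∈ s, p i) * log ((∑ i ∈ s, p i) / ∑ i ∈ s, q i) ≤
      ∑ i ∈ s, p i * log (p i / q i) := by
  rcases (sum_nonneg hq).eq_or_lt with hQ | hQ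
  · rw [sum_eq_zero_of_sum_eq_zero_of_imp hq hpq hQ.symm, zero_mul]
    refine sum_nonneg fun i hi => ?_
    rw [hpq i hi ((sum_eq_zero_iff_of_nonneg hq).1 hQ.symm i hi), zero_mul]
  have hcancel : ∀ i ∈ s, q i * (p i / q i) = p i := fun i hi =>
    mul_div_cancel_of_imp' (hpq i hi)
  -- Jensen for `x ↦ x log x` at the points `p i / q i` with weights `q i`
  have hjensen := convexOn_mul_log.map_centerMass_le hq hQ
    (p := fun i => p i / q i) fun i hi => div_nonneg (hp i hi) (hq i hi)
  simp only [centerMass, smul_eq_mul, Function.comp_apply] at hjensen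
  have hvalues : ∑ i ∈ s, q i * (p i / q i * log (p i / q i)) =
      ∑ i ∈ s, p i * log (p i / q i) :=
    sum_congr rfl fun i hi => by rw [← mul_assoc, hcancel i hi]
  rw [sum_congr rfl hcancel, hvalues] at hjensen
  set P := ∑ i ∈ s, p i
  set Q := ∑ i ∈ s, q i
  calc P * log (P / Q) = Q * (Q⁻¹ * P * log (Q⁻¹ * P)) := by
        rw [inv_mul_eq_div]; field_simp
    _ ≤ Q * (Q⁻¹ * ∑ i ∈ s, p i * log (p i / q i)) := mul_le_mul_of_nonneg_left hjensen hQ.le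
    _ = ∑ i ∈ s, p i * log (p i / q i) := by field_simp

/-- The Kullback–Leibler divergence between the Bernoulli laws with parameters `a` and `b`. -/
noncomputable def binaryKL (a b : ℝ) : ℝ :=
  a * log (a / b) + (1 - a) * log ((1 - a) / (1 - b))

lemma binaryKL_self (a : ℝ) : binaryKL a a = 0 := by
  simp [binaryKL]

lemma binaryKL_one_sub (a b : ℝ) : binaryKL (1 - a) (1 - b) = binaryKL a b := by
  simp only [binaryKL, sub_sub_cancel]
  ring

lemma mul_log_div_of_ne_zero (a : ℝ) {x : ℝ} (hx : x ≠ 0) :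
    a * log (a / x) = a * log a - a * log x := by
  rcases eq_or_ne a 0 with rfl | ha
  · simp
  · rw [log_div ha hx, mul_sub]

lemma two_mul_sq_sub_le_binaryKL_of_le {a b : ℝ} (ha : 0 ≤ a) (hab : a ≤ b) (hb : b < 1) :
    2 * (a - b) ^ 2 ≤ binaryKL a b := by
  rcases hab.eq_or_lt with rfl | hab'
  · simp [binaryKL_self]
  -- `binaryKL a x - 2 (a - x) ^ 2 = φ x - φ a`, and `φ' ≥ 0` on `[a, b]` as `x (1 - x) ≤ 1 / 4`
  set φ : ℝ → ℝ := fun x => -(a * log x + (1 - a) * log (1 - x)) - 2 * (a - x) ^ 2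
  have hφ' : ∀ x ∈ Set.Ioo a b, HasDerivAt φ ((x - a) * ((x * (1 - x))⁻¹ - 4)) x := by
    intro x ⟨hax, hxb⟩
    have hx0 : x ≠ 0 := (ha.trans_lt hax).ne'
    have hx1 : 1 - x ≠ 0 := by linarith
    have := ((((hasDerivAt_log hx0).const_mul a).add
      ((((hasDerivAt_id x).const_sub 1).log hx1).const_mul (1 - a))).neg).sub
      ((((hasDerivAt_id x).const_sub a).pow 2).const_mul 2)
    refine this.congr_deriv ?_
    simp only [id]
    field_simp
    ring
  have hφ_cont : ContinuousOn φ (Set.Icc a b) := by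
    have hlog : ContinuousOn (fun x => a * log x) (Set.Icc a b) := by
      rcases ha.eq_or_lt with rfl | ha
      · simpa using continuousOn_const
      · exact continuousOn_const.mul
          (continuousOn_log.mono fun x hx => (ha.trans_le hx.1).ne')
    have hlog₁ : ContinuousOn (fun x => (1 - a) * log (1 - x)) (Set.Icc a b) :=
      continuousOn_const.mul (continuousOn_log.comp (by fun_prop)
        fun x hx => sub_ne_zero.2 (hx.2.trans_lt hb).ne')
    exact ((hlog.add hlog₁).neg).sub (by fun_prop)
  have hφ_mono : MonotoneOn φ (Set.Icc a b) := by
    refine monotoneOn_of_deriv_nonneg (convex_Icc a b) hφ_cont ?_ ?_ <;> rw [interior_Icc]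
    · exact fun x hx => (hφ' x hx).differentiableAt.differentiableWithinAt
    · intro x hx
      rw [(hφ' x hx).deriv]
      have hx0 : 0 < x := ha.trans_lt hx.1
      have hx1 : 0 < 1 - x := by linarith [hx.2]
      have h4 : 4 ≤ (x * (1 - x))⁻¹ := by
        rw [le_inv_comm₀ (by norm_num) (by positivity)]
        nlinarith [sq_nonneg (2 * x - 1)]
      exact mul_nonneg (by linarith [hx.1]) (by linarith)
  have hb0 : b ≠ 0 := (ha.trans_lt hab').ne'
  have := hφ_mono (Set.left_mem_Icc.2 hab) (Set.right_mem_Icc.2 hab) hab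
  simp only [φ] at this
  rw [binaryKL, mul_log_div_of_ne_zero a hb0, mul_log_div_of_ne_zero (1 - a) (by linarith)]
  linarith

theorem two_mul_sq_sub_le_binaryKL {a b : ℝ} (ha₀ : 0 ≤ a) (ha₁ : a ≤ 1) (hb₀ : 0 ≤ b)
    (hb₁ : b ≤ 1) (hb₀a : b = 0 → a = 0) (hb₁a : b = 1 → a = 1) :
    2 * (a - b) ^ 2 ≤ binaryKL a b := by
  rcases hb₀.eq_or_lt with rfl | hb₀
  · simp [hb₀a rfl, binaryKL_self]
  rcases hb₁.eq_or_lt with rfl | hb₁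
  · simp [hb₁a rfl, binaryKL_self]
  rcases le_total a b with hab | hba
  · exact two_mul_sq_sub_le_binaryKL_of_le ha₀ hab hb₁
  · rw [← binaryKL_one_sub]
    convert two_mul_sq_sub_le_binaryKL_of_le (a := 1 - a) (b := 1 - b) (by linarith)
      (by linarith) (by linarith) using 1
    ring

section IsProbVec

variable {ι : Type*} [Fintype ι] {p q : ι → ℝ}

lemma IsProbVec.sum_compl [DecidableEq ι] (hp : IsProbVec p) (A : Finset ι) :
    ∑ i ∈ Aᶜ, p i = 1 - ∑ i ∈ A, p i := by
  rw [← hp.2, ← sum_add_sum_compl A p, add_sub_cancel_left]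

lemma IsProbVec.sum_nonneg (hp : IsProbVec p) (A : Finset ι) : 0 ≤ ∑ i ∈ A, p i :=
  Finset.sum_nonneg fun i _ => hp.1 i

lemma IsProbVec.sum_le_one (hp : IsProbVec p) (A : Finset ι) : ∑ i ∈ A, p i ≤ 1 :=
  hp.2 ▸ sum_le_univ_sum_of_nonneg hp.1

theorem binaryKL_le_sum_mul_log_div (hp : IsProbVec p) (hq : IsProbVec q)
    (hpq : ∀ i, q i = 0 → p i = 0) (A : Finset ι) :
    binaryKL (∑ i ∈ A, p i) (∑ i ∈ A, q i) ≤ ∑ i, p i * log (p i / q i) := by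
  classical
  have hA := sum_mul_log_div_sum_le A (fun i _ => hp.1 i) (fun i _ => hq.1 i) fun i _ => hpq i
  have hAc := sum_mul_log_div_sum_le Aᶜ (fun i _ => hp.1 i) (fun i _ => hq.1 i) fun i _ => hpq i
  rw [hp.sum_compl, hq.sum_compl] at hAc
  rw [← sum_add_sum_compl A]
  exact add_le_add hA hAc

theorem two_mul_sq_sum_sub_le_sum_mul_log_div (hp : IsProbVec p) (hq : IsProbVec q)
    (hpq : ∀ i, q i = 0 → p i = 0) (A : Finset ι) :
    2 * (∑ i ∈ A, p i - ∑ i ∈ A, q i) ^ 2 ≤ ∑ i, p i * log (p i / q i) := by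
  classical
  refine (two_mul_sq_sub_le_binaryKL (hp.sum_nonneg A) (hp.sum_le_one A) (hq.sum_nonneg A)
    (hq.sum_le_one A) (sum_eq_zero_of_sum_eq_zero_of_imp (fun i _ => hq.1 i) fun i _ => hpq i)
    fun hq₁ => ?_).trans (binaryKL_le_sum_mul_log_div hp hq hpq A)
  have hAc := sum_eq_zero_of_sum_eq_zero_of_imp (s := Aᶜ) (fun i _ => hq.1 i) (fun i _ => hpq i)
    (by rw [hq.sum_compl, hq₁, sub_self])
  rw [hp.sum_compl] at hAc
  linarith

end IsProbVec

section MutualInformation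

variable {α β : Type*} [Fintype α] [Fintype β] {p : α × β → ℝ}

lemma mutInf_eq_sum (p : α × β → ℝ) :
    mutInf p = ∑ x, p x * log (p x / (margFst p x.1 * margSnd p x.2)) := by
  rw [mutInf, Fintype.sum_prod_type]

lemma IsProbVec.le_margFst (hp : IsProbVec p) (x : α × β) : p x ≤ margFst p x.1 :=
  single_le_sum (f := fun b => p (x.1, b)) (fun _ _ => hp.1 _) (mem_univ x.2)

lemma IsProbVec.le_margSnd (hp : IsProbVec p) (x : α × β) : p x ≤ margSnd p x.2 :=
  single_le_sum (f := fun a => p (a, x.2)) (fun _ _ => hp.1 _) (mem_univ x.1)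

lemma IsProbVec.margFst_nonneg (hp : IsProbVec p) (a : α) : 0 ≤ margFst p a :=
  Finset.sum_nonneg fun _ _ => hp.1 _

lemma IsProbVec.margSnd_nonneg (hp : IsProbVec p) (b : β) : 0 ≤ margSnd p b :=
  Finset.sum_nonneg fun _ _ => hp.1 _

lemma IsProbVec.sum_margFst (hp : IsProbVec p) : ∑ a, margFst p a = 1 := by
  rw [← hp.2, Fintype.sum_prod_type]
  rfl

lemma IsProbVec.sum_margSnd (hp : IsProbVec p) : ∑ b, margSnd p b = 1 := by
  rw [← hp.2, Fintype.sum_prod_type_right]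
  rfl

lemma IsProbVec.margFst_mul_margSnd (hp : IsProbVec p) :
    IsProbVec fun x : α × β => margFst p x.1 * margSnd p x.2 := by
  refine ⟨fun x => mul_nonneg (hp.margFst_nonneg x.1) (hp.margSnd_nonneg x.2), ?_⟩
  rw [Fintype.sum_prod_type, ← sum_mul_sum, hp.sum_margFst, hp.sum_margSnd, one_mul]

lemma IsProbVec.eq_zero_of_margFst_mul_margSnd_eq_zero (hp : IsProbVec p) {x : α × β}
    (hx : margFst p x.1 * margSnd p x.2 = 0) : p x = 0 := by
  rcases mul_eq_zero.1 hx with h | h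
  · exact le_antisymm (h ▸ hp.le_margFst x) (hp.1 x)
  · exact le_antisymm (h ▸ hp.le_margSnd x) (hp.1 x)

lemma sum_filter_snd_mem [DecidableEq β] (E : α → Finset β) (f : α × β → ℝ) :
    ∑ x ∈ univ.filter (fun x : α × β => x.2 ∈ E x.1), f x = ∑ a, ∑ b ∈ E a, f (a, b) := by
  rw [sum_filter, Fintype.sum_prod_type]
  exact sum_congr rfl fun a _ => sum_ite_mem univ (E a) _ |>.trans (by rw [Finset.univ_inter])

theorem sum_sum_le_add_sqrt_mutInf (hp : IsProbVec p) (E : α → Finset β) {c : ℝ}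
    (hcov : ∀ s, ∑ d ∈ E s, margSnd p d ≤ c) :
    ∑ s, ∑ d ∈ E s, p (s, d) ≤ c + √(mutInf p / 2) := by
  classical
  have hpinsker := two_mul_sq_sum_sub_le_sum_mul_log_div hp hp.margFst_mul_margSnd
    (fun x => hp.eq_zero_of_margFst_mul_margSnd_eq_zero) (univ.filter fun x => x.2 ∈ E x.1)
  rw [← mutInf_eq_sum, sum_filter_snd_mem, sum_filter_snd_mem] at hpinsker
  dsimp only at hpinsker
  set P := ∑ s, ∑ d ∈ E s, p (s, d)
  set Q := ∑ s, ∑ d ∈ E s, margFst p s * margSnd p d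
  have hindep : Q ≤ c := calc
    Q = ∑ s, margFst p s * ∑ d ∈ E s, margSnd p d := by
      simp only [Q, mul_sum]
    _ ≤ ∑ s, margFst p s * c := by
      gcongr with s
      · exact hp.margFst_nonneg s
      · exact hcov s
    _ = c := by rw [← sum_mul, hp.sum_margFst, one_mul]
  have hgap := (le_abs_self _).trans (abs_le_sqrt (by linarith : (P - Q) ^ 2 ≤ mutInf p / 2))
  linarith

end MutualInformation

/-- Asymptotic selected-target validity: if the fixed-target noncoverage is at
most `α + r_m` with `r_m → 0`, and `I(S_m; D_m) ≤ η_m` with `η_m → 0`, then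
`limsup_m P(D_m ∈ E_{S_m,m}) ≤ α`. -/
theorem asymptotic_selected_validity
    (𝒮 𝒟 : ℕ → Type*) [∀ m, Fintype (𝒮 m)] [∀ m, Fintype (𝒟 m)]
    (p : ∀ m, 𝒮 m × 𝒟 m → ℝ) (hp : ∀ m, IsProbVec (p m))
    (E : ∀ m, 𝒮 m → Finset (𝒟 m)) (α : ℝ) (r η : ℕ → ℝ)
    (hcov : ∀ m, ∀ s : 𝒮 m, ∑ d ∈ E m s, margSnd (p m) d ≤ α + r m)
    (hr : Tendsto r atTop (nhds 0))
    (hmi : ∀ m, mutInf (p m) ≤ η m)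
    (hη : Tendsto η atTop (nhds 0)) :
    limsup (fun m => ∑ s, ∑ d ∈ E m s, p m (s, d)) atTop ≤ α := by
  have hbound : ∀ m, ∑ s, ∑ d ∈ E m s, p m (s, d) ≤ α + r m + √(η m / 2) := fun m =>
    (sum_sum_le_add_sqrt_mutInf (hp m) (E m) (hcov m)).trans (by gcongr; exact hmi m)
  have hlim : Tendsto (fun m => α + r m + √(η m / 2)) atTop (nhds α) := by
    simpa using (tendsto_const_nhds.add hr).add (hη.div_const 2).sqrt
  have hnonneg : ∀ m, 0 ≤ ∑ s, ∑ d ∈ E m s, p m (s, d) := fun m =>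
    sum_nonneg fun s _ => sum_nonneg fun d _ => (hp m).1 (s, d)
  calc limsup (fun m => ∑ s, ∑ d ∈ E m s, p m (s, d)) atTop
      ≤ limsup (fun m => α + r m + √(η m / 2)) atTop :=
        limsup_le_limsup (.of_forall hbound) (isCoboundedUnder_le_of_le atTop hnonneg)
          hlim.isBoundedUnder_le
    _ = α := hlim.limsup_eq
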